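/- Let X₁ ⊆ X and Y₁ ⊆ Y have the extension property in topological spaces X and Y respectively, with X₁ functionally closed in X. Let e : X₁ → Y₁ be a homeomorphism, E = {(x, e(x)) : x ∈ X₁}, and g : E → ℝ a function of the first Baire class. Then there exists a separately continuous function f : X × Y → ℝ with f|_E = g. -/

import Mathlib

/-!
Let `T : ℝ ≃ (-1, 1)`, let `ψ` vanish exactly on `X₁`, and pick `cₙ < 1` with `cₙ → 1`. Extend
`cₙ · T ∘ gₙ` from the graph to continuous `uₙ` on `X` and `vₙ` on `Y` with `|vₙ| ≤ cₙ` and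
`uₙ x = vₙ (e x)`. The defect `ρₙ(x, y) = |ψ x| + ∑_{k ≤ n} |uₖ x - vₖ y|` measures how far
`(x, y)` is from looking like a point of the graph, and
`F(x, y) = ∑ₙ (vₙ y - vₙ₋₁ y) · max(0, 1 - 2ⁿ ρₙ(x, y))` (with `v₋₁ = 0`).
Where some `ρₙ` is positive the sum is locally finite, hence jointly continuous. Where all `ρₙ`
vanish, `F(x, y) = lim uₙ x`; along the vertical line through such a point `vₙ y` stays
`ρₙ`-close to the convergent sequence `uₙ x`, and the cutoff discards the terms with
`ρₙ ≥ 2⁻ⁿ`; along the horizontal line `vₙ y` is itself convergent. In both cases Abel summation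
against the antitone cutoffs makes the partial sums converge uniformly on the line. Partial sums
are convex combinations of the `vₙ`, so `|F| < 1`, and `T⁻¹ ∘ F` is the required function.
-/

open Set Filter Topology

def HasIccExtension {Z : Type*} [TopologicalSpace Z] (A : Set Z) : Prop :=
  ∀ u : A → ℝ, Continuous u → (∀ a, u a ∈ Icc (0 : ℝ) 1) →
    ∃ v : Z → ℝ, Continuous v ∧ (∀ z, v z ∈ Icc (0 : ℝ) 1) ∧ ∀ a : A, v a = u a

theorem HasIccExtension.exists_extension_abs_le {Z : Type*} [TopologicalSpace Z] {A : Set Z}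
    (hA : HasIccExtension A) {w : A → ℝ} (hw : Continuous w) {c : ℝ} (hc : 0 < c)
    (hwc : ∀ a, |w a| ≤ c) :
    ∃ v : Z → ℝ, Continuous v ∧ (∀ z, |v z| ≤ c) ∧ ∀ a : A, v a = w a := by
  obtain ⟨V, hV, hV01, hVw⟩ := hA (fun a => (w a + c) / (2 * c)) (by fun_prop) fun a => by
    obtain ⟨h₁, h₂⟩ := abs_le.1 (hwc a)
    exact ⟨div_nonneg (by linarith) (by positivity), (div_le_one (by positivity)).2 (by linarith)⟩
  refine ⟨fun z => 2 * c * V z - c, by fun_prop, fun z => ?_, fun a => ?_⟩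
  · obtain ⟨h₀, h₁⟩ := hV01 z
    exact abs_le.2 ⟨by nlinarith, by nlinarith⟩
  · simp only [hVw]
    field_simp
    ring

theorem HasIccExtension.exists_extensions_along_homeomorph {X Y : Type*} [TopologicalSpace X]
    [TopologicalSpace Y] {X₁ : Set X} {Y₁ : Set Y} (hX₁ : HasIccExtension X₁)
    (hY₁ : HasIccExtension Y₁) (e : X₁ ≃ₜ Y₁) {w : X₁ → ℝ} (hw : Continuous w) {c : ℝ}
    (hc : 0 < c) (hwc : ∀ a, |w a| ≤ c) :
    ∃ u : X → ℝ, ∃ v : Y → ℝ, Continuous u ∧ Continuous v ∧ (∀ y, |v y| ≤ c) ∧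
      ∀ a : X₁, u a = w a ∧ v (e a) = w a := by
  obtain ⟨u, hu, -, huw⟩ := hX₁.exists_extension_abs_le hw hc hwc
  obtain ⟨v, hv, hvc, hvw⟩ :=
    hY₁.exists_extension_abs_le (hw.comp e.symm.continuous) hc fun b => hwc _
  exact ⟨u, v, hu, hv, hvc, fun a => ⟨huw a, by simp [hvw]⟩⟩

theorem exists_tendsto_orderIsoIooNegOneOne {Z : Type*} [TopologicalSpace Z] {g : Z → ℝ}
    {gs : ℕ → Z → ℝ} (hgs : ∀ n, Continuous (gs n))
    (hlim : ∀ z, Tendsto (gs · z) atTop (𝓝 (g z))) :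
    ∃ c : ℕ → ℝ, ∃ w : ℕ → Z → ℝ, (∀ n, 0 < c n ∧ c n < 1) ∧ (∀ n, Continuous (w n)) ∧
      (∀ n z, |w n z| ≤ c n) ∧
      ∀ z, Tendsto (w · z) atTop (𝓝 (orderIsoIooNegOneOne ℝ (g z))) := by
  set T := orderIsoIooNegOneOne ℝ
  have hT : Continuous fun t => (T t : ℝ) := continuous_subtype_val.comp T.continuous
  let c : ℕ → ℝ := fun n => (n + 1) / (n + 2)
  have hc_lim : Tendsto c atTop (𝓝 1) := by
    refine ((tendsto_natCast_div_add_atTop (1 : ℝ)).comp (tendsto_add_atTop_nat 1)).congr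
      fun n => ?_
    simp only [Function.comp_apply, c]
    push_cast
    ring
  refine ⟨c, fun n z => c n * T (gs n z),
    fun n => ⟨by positivity, (div_lt_one (by positivity)).2 (by linarith)⟩,
    fun n => continuous_const.mul (hT.comp (hgs n)), fun n z => ?_, fun z => ?_⟩
  · rw [abs_mul, abs_of_pos (by positivity : 0 < c n)]
    exact mul_le_of_le_one_right (by positivity) (abs_lt.2 (T _).2).le
  · have h := hc_lim.mul ((hT.tendsto _).comp (hlim z))
    rwa [one_mul] at h

section

open Finset

theorem abs_sum_range_mul_le_of_antitone {b w : ℕ → ℝ} {ε : ℝ} {N : ℕ} (hw : Antitone w)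
    (hw₀ : ∀ n, 0 ≤ w n) (hw₁ : w 0 ≤ 1) (hb : ∀ j ≤ N, |∑ n ∈ range j, b n| ≤ ε) :
    |∑ n ∈ range N, b n * w n| ≤ ε := by
  have hε : 0 ≤ ε := by simpa using hb 0 N.zero_le
  have hparts := sum_range_by_parts w b N
  simp only [smul_eq_mul] at hparts
  have hhead : |w (N - 1) * ∑ n ∈ range N, b n| ≤ w (N - 1) * ε := by
    rw [abs_mul, abs_of_nonneg (hw₀ _)]
    exact mul_le_mul_of_nonneg_left (hb N le_rfl) (hw₀ _)
  have hbody : |∑ i ∈ range (N - 1), (w (i + 1) - w i) * ∑ n ∈ range (i + 1), b n|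
      ≤ ∑ i ∈ range (N - 1), (w i - w (i + 1)) * ε := by
    refine (abs_sum_le_sum_abs _ _).trans (sum_le_sum fun i hi => ?_)
    rw [abs_mul, abs_sub_comm, abs_of_nonneg (sub_nonneg.2 (hw i.le_succ))]
    exact mul_le_mul_of_nonneg_left (hb _ (by simp at hi; omega)) (sub_nonneg.2 (hw i.le_succ))
  rw [sum_congr rfl fun n _ => mul_comm (b n) (w n), hparts]
  calc _ ≤ w (N - 1) * ε + ∑ i ∈ range (N - 1), (w i - w (i + 1)) * ε :=
        (abs_sub _ _).trans (add_le_add hhead hbody)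
    _ = w 0 * ε := by rw [← sum_mul, sum_range_sub']; ring
    _ ≤ ε := mul_le_of_le_one_left hε hw₁

def increment (a : ℕ → ℝ) : ℕ → ℝ
  | 0 => a 0
  | n + 1 => a (n + 1) - a n

theorem sum_range_succ_increment (a : ℕ → ℝ) (N : ℕ) :
    ∑ n ∈ range (N + 1), increment a n = a N := by
  induction N with
  | zero => simp [increment]
  | succ N ih => rw [sum_range_succ, ih, increment]; ring

namespace GraphSeries

variable {X Y : Type*} (ψ : X → ℝ) (u : ℕ → X → ℝ) (v : ℕ → Y → ℝ)

def defect (n : ℕ) (p : X × Y) : ℝ :=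
  |ψ p.1| + ∑ k ∈ range (n + 1), |u k p.1 - v k p.2|

def cutoff (n : ℕ) (p : X × Y) : ℝ :=
  max 0 (1 - 2 ^ n * defect ψ u v n p)

def partialSum (N : ℕ) (p : X × Y) : ℝ :=
  ∑ n ∈ range (N + 1), increment (v · p.2) n * cutoff ψ u v n p

noncomputable def seriesSum (p : X × Y) : ℝ :=
  limUnder atTop fun N => partialSum ψ u v N p

variable {ψ u v}

theorem defect_nonneg (n : ℕ) (p : X × Y) : 0 ≤ defect ψ u v n p := by
  unfold defect; positivity

theorem defect_mono (p : X × Y) : Monotone (defect ψ u v · p) := fun _ _ hmn =>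
  add_le_add le_rfl (sum_le_sum_of_subset_of_nonneg (range_subset_range.2 (by omega))
    fun _ _ _ => abs_nonneg _)

theorem abs_sub_le_defect {k n : ℕ} (hkn : k ≤ n) (p : X × Y) :
    |u k p.1 - v k p.2| ≤ defect ψ u v n p := by
  calc |u k p.1 - v k p.2| ≤ ∑ k ∈ range (n + 1), |u k p.1 - v k p.2| :=
        single_le_sum (f := fun k => |u k p.1 - v k p.2|) (fun _ _ => abs_nonneg _)
          (Finset.mem_range_succ_iff.2 hkn)
    _ ≤ defect ψ u v n p := le_add_of_nonneg_left (abs_nonneg _)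

theorem defect_eq_zero_iff {n : ℕ} {p : X × Y} :
    defect ψ u v n p = 0 ↔ ψ p.1 = 0 ∧ ∀ k ≤ n, u k p.1 = v k p.2 := by
  rw [defect, add_eq_zero_iff_of_nonneg (abs_nonneg _) (sum_nonneg fun _ _ => abs_nonneg _),
    sum_eq_zero_iff_of_nonneg fun _ _ => abs_nonneg _]
  simp [sub_eq_zero]

theorem forall_defect_eq_zero_iff {p : X × Y} :
    (∀ n, defect ψ u v n p = 0) ↔ ψ p.1 = 0 ∧ ∀ n, u n p.1 = v n p.2 := by
  simp only [defect_eq_zero_iff]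
  exact ⟨fun h => ⟨(h 0).1, fun n => (h n).2 n le_rfl⟩, fun h _ => ⟨h.1, fun k _ => h.2 k⟩⟩

theorem exists_defect_pos {p : X × Y} (h : ¬(ψ p.1 = 0 ∧ ∀ n, u n p.1 = v n p.2)) :
    ∃ n, 0 < defect ψ u v n p := by
  rw [← forall_defect_eq_zero_iff, not_forall] at h
  obtain ⟨n, hn⟩ := h
  exact ⟨n, (defect_nonneg n p).lt_of_ne' hn⟩

theorem cutoff_nonneg (n : ℕ) (p : X × Y) : 0 ≤ cutoff ψ u v n p := le_max_left _ _

theorem cutoff_le_one (n : ℕ) (p : X × Y) : cutoff ψ u v n p ≤ 1 := by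
  have := mul_nonneg (pow_nonneg zero_le_two n) (defect_nonneg n p : 0 ≤ defect ψ u v n p)
  exact max_le zero_le_one (by linarith)

theorem cutoff_antitone (p : X × Y) : Antitone (cutoff ψ u v · p) := fun m n hmn =>
  max_le_max le_rfl (sub_le_sub_left (mul_le_mul (pow_le_pow_right₀ one_le_two hmn)
    (defect_mono p hmn) (defect_nonneg m p) (by positivity)) 1)

theorem cutoff_eq_one {n : ℕ} {p : X × Y} (h : defect ψ u v n p = 0) : cutoff ψ u v n p = 1 := by
  simp [cutoff, h]

theorem defect_mul_cutoff_le (n : ℕ) (p : X × Y) :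
    defect ψ u v n p * cutoff ψ u v n p ≤ (1 / 2) ^ n := by
  rcases le_total (1 - 2 ^ n * defect ψ u v n p) 0 with h | h
  · simp [cutoff, max_eq_left h]
  have hinv : (1 / 2 : ℝ) ^ n * 2 ^ n = 1 := by rw [← mul_pow]; norm_num
  calc defect ψ u v n p * cutoff ψ u v n p ≤ defect ψ u v n p :=
        mul_le_of_le_one_right (defect_nonneg n p) (cutoff_le_one n p)
    _ = (1 / 2) ^ n * (2 ^ n * defect ψ u v n p) := by rw [← mul_assoc, hinv, one_mul]
    _ ≤ (1 / 2) ^ n := mul_le_of_le_one_right (by positivity) (by linarith)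

theorem exists_cutoff_eq_zero {δ : ℝ} (hδ : 0 < δ) (N : ℕ) :
    ∃ M, ∀ p n, δ ≤ defect ψ u v N p → M ≤ n → cutoff ψ u v n p = 0 := by
  obtain ⟨K, hK⟩ := pow_unbounded_of_one_lt δ⁻¹ one_lt_two
  refine ⟨max N K, fun p n hp hn => max_eq_left ?_⟩
  have hKδ : 1 ≤ 2 ^ K * δ := by
    rw [inv_lt_iff_one_lt_mul₀ hδ] at hK; linarith
  have hKn : (2 : ℝ) ^ K ≤ 2 ^ n := pow_le_pow_right₀ one_le_two (le_of_max_le_right hn)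
  have hNn : defect ψ u v N p ≤ defect ψ u v n p := defect_mono p (le_of_max_le_left hn)
  have : 1 ≤ 2 ^ n * defect ψ u v n p :=
    hKδ.trans (mul_le_mul hKn (hp.trans hNn) hδ.le (by positivity))
  linarith

theorem partialSum_eq_of_forall_defect_eq_zero {p : X × Y} (h : ∀ n, defect ψ u v n p = 0)
    (N : ℕ) : partialSum ψ u v N p = u N p.1 := by
  simp only [partialSum, cutoff_eq_one (h _), mul_one, sum_range_succ_increment]
  exact ((forall_defect_eq_zero_iff.1 h).2 N).symm

theorem partialSum_eq_of_cutoff_eq_zero {p : X × Y} {M N : ℕ}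
    (h : ∀ n, M ≤ n → cutoff ψ u v n p = 0) (hMN : M ≤ N) :
    partialSum ψ u v N p = partialSum ψ u v M p := by
  induction N, hMN using Nat.le_induction with
  | base => rfl
  | succ N hMN ih =>
    rw [partialSum, sum_range_succ, ← partialSum, ih, h (N + 1) (by omega), mul_zero, add_zero]

theorem abs_partialSum_le {N : ℕ} {p : X × Y} {C : ℝ} (h : ∀ n ≤ N, |v n p.2| ≤ C) :
    |partialSum ψ u v N p| ≤ C := by
  refine abs_sum_range_mul_le_of_antitone (cutoff_antitone p) (cutoff_nonneg · p)
    (cutoff_le_one 0 p) fun j hj => ?_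
  cases j with
  | zero => simpa using (abs_nonneg _).trans (h 0 N.zero_le)
  | succ j => rw [sum_range_succ_increment]; exact h j (by omega)

theorem abs_sum_range_sub_mul_cutoff_le {p : X × Y} {r : ℕ → ℝ}
    (hr : ∀ n, |r n| ≤ defect ψ u v n p) (m k : ℕ) :
    |∑ i ∈ range k, (r (m + i + 1) - r (m + i)) * cutoff ψ u v (m + i + 1) p|
      ≤ 2 * (1 / 2) ^ m := by
  refine (abs_sum_le_sum_abs _ _).trans ?_
  calc ∑ i ∈ range k, |(r (m + i + 1) - r (m + i)) * cutoff ψ u v (m + i + 1) p|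
      ≤ ∑ i ∈ range k, (1 / 2) ^ m * (1 / 2) ^ i := sum_le_sum fun i _ => ?_
    _ ≤ (1 / 2) ^ m * 2 := by rw [← mul_sum]; gcongr; exact sum_geometric_two_le k
    _ = 2 * (1 / 2) ^ m := mul_comm _ _
  have hdiff : |r (m + i + 1) - r (m + i)| ≤ 2 * defect ψ u v (m + i + 1) p := by
    have h₁ := hr (m + i + 1)
    have h₂ := (hr (m + i)).trans (defect_mono p (m + i).le_succ)
    exact (abs_sub _ _).trans (by linarith)
  calc |(r (m + i + 1) - r (m + i)) * cutoff ψ u v (m + i + 1) p|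
      ≤ 2 * defect ψ u v (m + i + 1) p * cutoff ψ u v (m + i + 1) p := by
        rw [abs_mul, abs_of_nonneg (cutoff_nonneg _ p)]
        exact mul_le_mul_of_nonneg_right hdiff (cutoff_nonneg _ p)
    _ ≤ 2 * (1 / 2) ^ (m + i + 1) := by
        rw [mul_assoc]; exact mul_le_mul_of_nonneg_left (defect_mul_cutoff_le _ p) zero_le_two
    _ = (1 / 2) ^ m * (1 / 2) ^ i := by ring

theorem abs_partialSum_add_sub_le {p : X × Y} {a : ℕ → ℝ} {ε : ℝ} {m : ℕ}
    (hva : ∀ n, |v n p.2 - a n| ≤ defect ψ u v n p) (ha : ∀ j, |a (m + j) - a m| ≤ ε) (k : ℕ) :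
    |partialSum ψ u v (k + m) p - partialSum ψ u v m p| ≤ ε + 2 * (1 / 2) ^ m := by
  set w : ℕ → ℝ := fun i => cutoff ψ u v (m + i + 1) p
  set r : ℕ → ℝ := fun n => v n p.2 - a n
  have hsplit : partialSum ψ u v (k + m) p - partialSum ψ u v m p
      = ∑ i ∈ range k, (a (m + i + 1) - a (m + i)) * w i
        + ∑ i ∈ range k, (r (m + i + 1) - r (m + i)) * w i := by
    rw [partialSum, show k + m + 1 = m + 1 + k by omega, sum_range_add, ← partialSum,
      add_sub_cancel_left, ← sum_add_distrib]
    refine sum_congr rfl fun i _ => ?_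
    rw [show m + 1 + i = m + i + 1 by omega, increment]
    ring
  have hmain : |∑ i ∈ range k, (a (m + i + 1) - a (m + i)) * w i| ≤ ε := by
    refine abs_sum_range_mul_le_of_antitone (fun i j hij => cutoff_antitone p (by omega))
      (fun i => cutoff_nonneg _ p) (cutoff_le_one _ p) fun j _ => ?_
    have htele := sum_range_sub (fun i => a (m + i)) j
    simp only [← add_assoc, add_zero] at htele
    rw [htele]
    exact ha j
  rw [hsplit]
  exact (abs_add_le _ _).trans (add_le_add hmain (abs_sum_range_sub_mul_cutoff_le hva m k))

theorem seriesSum_eq_partialSum {p : X × Y} {M : ℕ} (h : ∀ n, M ≤ n → cutoff ψ u v n p = 0) :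
    seriesSum ψ u v p = partialSum ψ u v M p :=
  (tendsto_atTop_of_eventually_const fun _ hN => partialSum_eq_of_cutoff_eq_zero h hN).limUnder_eq

theorem tendsto_seriesSum_of_forall_defect_eq_zero {p : X × Y} (h : ∀ n, defect ψ u v n p = 0)
    (hp : CauchySeq (u · p.1)) : Tendsto (u · p.1) atTop (𝓝 (seriesSum ψ u v p)) := by
  obtain ⟨L, hL⟩ := cauchySeq_tendsto_of_complete hp
  rwa [seriesSum, funext (partialSum_eq_of_forall_defect_eq_zero h), hL.limUnder_eq]

theorem tendsto_partialSum (hconv : ∀ x, ψ x = 0 → CauchySeq (u · x)) (p : X × Y) :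
    Tendsto (partialSum ψ u v · p) atTop (𝓝 (seriesSum ψ u v p)) := by
  by_cases h : ∀ n, defect ψ u v n p = 0
  · rw [funext (partialSum_eq_of_forall_defect_eq_zero h)]
    exact tendsto_seriesSum_of_forall_defect_eq_zero h (hconv _ (forall_defect_eq_zero_iff.1 h).1)
  · obtain ⟨N, hN⟩ := exists_defect_pos (forall_defect_eq_zero_iff.not.1 h)
    obtain ⟨M, hM⟩ := exists_cutoff_eq_zero hN N
    rw [seriesSum_eq_partialSum (hM p · le_rfl)]
    exact tendsto_atTop_of_eventually_const fun _ hM' =>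
      partialSum_eq_of_cutoff_eq_zero (hM p · le_rfl) hM'

theorem abs_seriesSum_lt_one_of_defect_pos {p : X × Y} {N : ℕ} (hN : 0 < defect ψ u v N p)
    (hv : ∀ n, |v n p.2| < 1) : |seriesSum ψ u v p| < 1 := by
  obtain ⟨M, hM⟩ := exists_cutoff_eq_zero hN N
  rw [seriesSum_eq_partialSum (hM p · le_rfl)]
  obtain ⟨n₀, -, hn₀⟩ := (range (M + 1)).exists_max_image (fun n => |v n p.2|) nonempty_range_add_one
  exact (abs_partialSum_le fun n hn => hn₀ n (mem_range_succ_iff.2 hn)).trans_lt (hv n₀)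

variable [TopologicalSpace X] [TopologicalSpace Y]

theorem continuous_defect (hψ : Continuous ψ) (hu : ∀ n, Continuous (u n))
    (hv : ∀ n, Continuous (v n)) (n : ℕ) : Continuous (defect ψ u v n) := by
  unfold defect; fun_prop

theorem continuous_partialSum (hψ : Continuous ψ) (hu : ∀ n, Continuous (u n))
    (hv : ∀ n, Continuous (v n)) (N : ℕ) : Continuous (partialSum ψ u v N) := by
  have hcutoff (n : ℕ) : Continuous (cutoff ψ u v n) := by
    have := continuous_defect hψ hu hv n
    unfold cutoff; fun_prop
  refine continuous_finsetSum _ fun n _ => Continuous.mul ?_ (hcutoff n)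
  cases n <;> simp only [increment] <;> fun_prop

theorem continuousAt_seriesSum_of_defect_pos (hψ : Continuous ψ) (hu : ∀ n, Continuous (u n))
    (hv : ∀ n, Continuous (v n)) {p₀ : X × Y} {N : ℕ} (hN : 0 < defect ψ u v N p₀) :
    ContinuousAt (seriesSum ψ u v) p₀ := by
  obtain ⟨M, hM⟩ := exists_cutoff_eq_zero (half_pos hN) N
  have hnear : ∀ᶠ p in 𝓝 p₀, defect ψ u v N p₀ / 2 < defect ψ u v N p :=
    (continuous_defect hψ hu hv N).continuousAt.eventually_const_lt (half_lt_self hN)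
  exact (continuous_partialSum hψ hu hv M).continuousAt.congr
    (hnear.mono fun p hp => (seriesSum_eq_partialSum (hM p · hp.le)).symm)

theorem continuous_seriesSum_comp {Z : Type*} [TopologicalSpace Z] (hψ : Continuous ψ)
    (hu : ∀ n, Continuous (u n)) (hv : ∀ n, Continuous (v n))
    (hconv : ∀ x, ψ x = 0 → CauchySeq (u · x)) {γ : Z → X × Y} (hγ : Continuous γ)
    {a : ℕ → ℝ} (ha : CauchySeq a) (hva : ∀ z n, |v n (γ z).2 - a n| ≤ defect ψ u v n (γ z)) :
    Continuous (seriesSum ψ u v ∘ γ) := by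
  refine continuous_of_uniform_approx_of_continuous fun U hU => ?_
  obtain ⟨ε, hε, hεU⟩ := Metric.mem_uniformity_dist.1 hU
  obtain ⟨N, hN⟩ := Metric.cauchySeq_iff.1 ha (ε / 4) (by positivity)
  obtain ⟨K, hK⟩ := exists_pow_lt_of_lt_one (by positivity : (0 : ℝ) < ε / 8)
    (by norm_num : (1 / 2 : ℝ) < 1)
  set m := max N K
  have hosc (j : ℕ) : |a (m + j) - a m| ≤ ε / 4 :=
    (hN _ (le_add_right (le_max_left N K)) _ (le_max_left N K)).le
  have hgeom : (1 / 2 : ℝ) ^ m ≤ (1 / 2) ^ K :=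
    pow_le_pow_of_le_one (by norm_num) (by norm_num) (le_max_right N K)
  refine ⟨partialSum ψ u v m ∘ γ, (continuous_partialSum hψ hu hv m).comp hγ, fun z => hεU ?_⟩
  have htail : |seriesSum ψ u v (γ z) - partialSum ψ u v m (γ z)| ≤ ε / 4 + 2 * (1 / 2) ^ m :=
    le_of_tendsto (((tendsto_partialSum hconv (γ z)).comp
        (tendsto_add_atTop_nat m)).sub_const _).abs
      (Eventually.of_forall (abs_partialSum_add_sub_le (hva z) hosc))
  rw [Real.dist_eq]
  simp only [Function.comp_apply]
  linarith

theorem continuous_seriesSum_right (hψ : Continuous ψ) (hu : ∀ n, Continuous (u n))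
    (hv : ∀ n, Continuous (v n)) (hconv : ∀ x, ψ x = 0 → CauchySeq (u · x)) (x : X) :
    Continuous fun y => seriesSum ψ u v (x, y) := by
  by_cases hx : ψ x = 0
  · exact continuous_seriesSum_comp hψ hu hv hconv (γ := fun y => (x, y)) (by fun_prop)
      (hconv x hx) fun y n => by rw [abs_sub_comm]; exact abs_sub_le_defect le_rfl (x, y)
  · refine continuous_iff_continuousAt.2 fun y => ?_
    obtain ⟨N, hN⟩ := exists_defect_pos (p := (x, y)) fun h => hx h.1
    exact (continuousAt_seriesSum_of_defect_pos hψ hu hv hN).comp (f := fun y' => (x, y'))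
      (by fun_prop)

theorem continuous_seriesSum_left (hψ : Continuous ψ) (hu : ∀ n, Continuous (u n))
    (hv : ∀ n, Continuous (v n)) (hconv : ∀ x, ψ x = 0 → CauchySeq (u · x)) (y : Y) :
    Continuous fun x => seriesSum ψ u v (x, y) := by
  by_cases h : ∃ x₀, ψ x₀ = 0 ∧ ∀ n, u n x₀ = v n y
  · obtain ⟨x₀, hx₀, huv⟩ := h
    have ha : CauchySeq (v · y) := by simpa only [← huv] using hconv x₀ hx₀
    exact continuous_seriesSum_comp hψ hu hv hconv (γ := fun x => (x, y)) (by fun_prop) ha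
      fun x n => by simpa using defect_nonneg n (x, y)
  · refine continuous_iff_continuousAt.2 fun x => ?_
    obtain ⟨N, hN⟩ := exists_defect_pos (p := (x, y)) fun hxy => h ⟨x, hxy⟩
    exact (continuousAt_seriesSum_of_defect_pos hψ hu hv hN).comp (f := fun x' => (x', y))
      (by fun_prop)

theorem exists_separatelyContinuous_abs_lt_one (hψ : Continuous ψ) (hu : ∀ n, Continuous (u n))
    (hv : ∀ n, Continuous (v n)) (hv₁ : ∀ n y, |v n y| < 1)
    (hlim : ∀ x, ψ x = 0 → ∃ L, |L| < 1 ∧ Tendsto (u · x) atTop (𝓝 L)) :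
    ∃ F : X × Y → ℝ, (∀ x, Continuous fun y => F (x, y)) ∧ (∀ y, Continuous fun x => F (x, y)) ∧
      (∀ p, |F p| < 1) ∧
      ∀ x y, ψ x = 0 → (∀ n, u n x = v n y) → Tendsto (u · x) atTop (𝓝 (F (x, y))) := by
  have hconv (x : X) (hx : ψ x = 0) : CauchySeq (u · x) :=
    let ⟨_, _, hL⟩ := hlim x hx; hL.cauchySeq
  refine ⟨seriesSum ψ u v, continuous_seriesSum_right hψ hu hv hconv,
    continuous_seriesSum_left hψ hu hv hconv, fun p => ?_, fun x y hx huv =>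
      tendsto_seriesSum_of_forall_defect_eq_zero (forall_defect_eq_zero_iff.2 ⟨hx, huv⟩)
        (hconv x hx)⟩
  by_cases h : ∀ n, defect ψ u v n p = 0
  · obtain ⟨hx, -⟩ := forall_defect_eq_zero_iff.1 h
    obtain ⟨L, hL₁, hL⟩ := hlim p.1 hx
    rwa [tendsto_nhds_unique (tendsto_seriesSum_of_forall_defect_eq_zero h (hconv _ hx)) hL]
  · obtain ⟨N, hN⟩ := exists_defect_pos (forall_defect_eq_zero_iff.not.1 h)
    exact abs_seriesSum_lt_one_of_defect_pos hN (hv₁ · p.2)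

end GraphSeries

end

theorem stmt8 {X Y : Type*} [TopologicalSpace X] [TopologicalSpace Y]
    (X₁ : Set X) (Y₁ : Set Y)
    (hX₁ : ∀ u : X₁ → ℝ, Continuous u → (∀ a, u a ∈ Icc (0:ℝ) 1) →
      ∃ v : X → ℝ, Continuous v ∧ (∀ x, v x ∈ Icc (0:ℝ) 1) ∧ ∀ a : X₁, v a = u a)
    (hY₁ : ∀ u : Y₁ → ℝ, Continuous u → (∀ b, u b ∈ Icc (0:ℝ) 1) →
      ∃ v : Y → ℝ, Continuous v ∧ (∀ y, v y ∈ Icc (0:ℝ) 1) ∧ ∀ b : Y₁, v b = u b)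
    (e : X₁ ≃ₜ Y₁)
    (E : Set (X × Y)) (hE : E = {p : X × Y | ∃ x : X₁, p = ((x : X), (e x : Y))})
    (g : E → ℝ)
    (hg : ∃ gs : ℕ → E → ℝ, (∀ n, Continuous (gs n)) ∧
      ∀ p : E, Tendsto (fun n => gs n p) atTop (𝓝 (g p)))
    (hX₁fc : ∃ φ : X → ℝ, Continuous φ ∧ X₁ = φ ⁻¹' {0}) :
    ∃ f : X × Y → ℝ,
      (∀ x : X, Continuous fun y => f (x, y)) ∧
      (∀ y : Y, Continuous fun x => f (x, y)) ∧
      (∀ p : E, f p = g p) := by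
  obtain ⟨gs, hgs, hgs_lim⟩ := hg
  obtain ⟨φ, hφ, hX₁φ⟩ := hX₁fc
  set T := orderIsoIooNegOneOne ℝ
  obtain ⟨c, w, hc, hw, hw_le, hw_lim⟩ := exists_tendsto_orderIsoIooNegOneOne hgs hgs_lim
  let ι : X₁ → E := fun a => ⟨((a : X), (e a : Y)), hE ▸ ⟨a, rfl⟩⟩
  have hι : Continuous ι := by fun_prop
  choose u v hu hv hv_le huvw using fun n => HasIccExtension.exists_extensions_along_homeomorph
    hX₁ hY₁ e ((hw n).comp hι) (hc n).1 fun a => hw_le n (ι a)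
  have hu_lim (a : X₁) : Tendsto (u · a) atTop (𝓝 (T (g (ι a)))) :=
    (hw_lim (ι a)).congr fun n => ((huvw n a).1).symm
  obtain ⟨F, hFx, hFy, hF₁, hF_lim⟩ := GraphSeries.exists_separatelyContinuous_abs_lt_one hφ hu hv
    (fun n y => (hv_le n y).trans_lt (hc n).2) fun x hx =>
      ⟨_, abs_lt.2 (T _).2, hu_lim ⟨x, hX₁φ ▸ hx⟩⟩
  refine ⟨fun p => T.symm ⟨F p, abs_lt.1 (hF₁ p)⟩,
    fun x => T.symm.continuous.comp ((hFx x).subtype_mk fun y => abs_lt.1 (hF₁ (x, y))),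
    fun y => T.symm.continuous.comp ((hFy y).subtype_mk fun x => abs_lt.1 (hF₁ (x, y))),
    fun p => ?_⟩
  obtain ⟨a, ha⟩ : ∃ a : X₁, (p : X × Y) = ((a : X), (e a : Y)) := hE ▸ p.2
  obtain rfl : p = ι a := Subtype.ext ha
  have hFa : F (ι a) = T (g (ι a)) := tendsto_nhds_unique
    (hF_lim a (e a) (hX₁φ ▸ a.2) fun n => (huvw n a).1.trans (huvw n a).2.symm) (hu_lim a)
  exact T.symm_apply_eq.2 (Subtype.ext hFa)
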